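/- For every R > 0, the exit-time density of the 3-ball integrates to one: ∫_0^∞ f₃^exit(t) dt = 1, i.e., f₃^exit is a probability density function on (0, ∞). -/

import Mathlib

/-!
With `c = π / (2 R²)`, the density is `t ↦ c · K'(c t)` for the theta function
`K(s) = cosKernel (1/2) s = ∑_{n ∈ ℤ} (-1)ⁿ e^{-π n² s}`, so its integral is `K(∞) - K(0⁺)`.
Here `K(∞) = 1`, while `K(0⁺) = 0` follows from the Jacobi transformation
`K(s) = s^{-1/2} ∑_{n ∈ ℤ} e^{-π (n + 1/2)² / s}`. To justify the improper integral we show that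
`K' ≥ 0`: for `π s ≥ 1` the series for `K'` is alternating with decreasing terms, and for
`s ≤ π / 2` every term of the transformed series is increasing in `s`.
-/

open Real Filter Topology MeasureTheory

/-- Exit-time density of a standard 3-dimensional Brownian motion started at the
center of the ball of radius `R` and killed at its boundary. -/
noncomputable def f₃exit (R t : ℝ) : ℝ :=
  (π ^ 2 / R ^ 2) * ∑' k : ℕ, (-1 : ℝ) ^ k * ((k : ℝ) + 1) ^ 2 *
    Real.exp (-(((k : ℝ) + 1) ^ 2 * π ^ 2 * t) / (2 * R ^ 2))

open Set HurwitzZeta Asymptotics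

lemma tendsto_cosKernel_atTop (a : UnitAddCircle) : Tendsto (cosKernel a) atTop (𝓝 1) := by
  obtain ⟨p, hp, hO⟩ := isBigO_atTop_cosKernel_sub a
  simpa using (hO.trans_tendsto (tendsto_exp_atBot.comp
    (tendsto_id.const_mul_atTop_of_neg (neg_neg_of_pos hp)))).add_const 1

lemma cosKernel_one_div {a : UnitAddCircle} {x : ℝ} (hx : 0 < x) :
    cosKernel a (1 / x) = x ^ (1 / 2 : ℝ) * evenKernel a x := by
  rw [evenKernel_functional_equation, ← mul_assoc, mul_one_div_cancel (by positivity), one_mul]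

lemma hasSum_int_cosKernel_one_div (a : ℝ) {t : ℝ} (ht : 0 < t) :
    HasSum (fun n : ℤ ↦ (1 / t) ^ (1 / 2 : ℝ) * rexp (-π * (n + a) ^ 2 * (1 / t)))
      (cosKernel a t) := by
  simpa only [← cosKernel_one_div (one_div_pos.mpr ht), one_div_one_div] using
    (hasSum_int_evenKernel a (one_div_pos.mpr ht)).mul_left ((1 / t) ^ (1 / 2 : ℝ))

lemma tendsto_cosKernel_nhdsGT_zero {a : UnitAddCircle} (ha : a ≠ 0) :
    Tendsto (cosKernel a) (𝓝[>] 0) (𝓝 0) := by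
  obtain ⟨p, hp, hO⟩ := isBigO_atTop_evenKernel_sub a
  simp only [ha, if_false, sub_zero] at hO
  have h : Tendsto (fun x ↦ x ^ (1 / 2 : ℝ) * evenKernel a x) atTop (𝓝 0) :=
    ((isBigO_refl (fun x : ℝ ↦ x ^ (1 / 2 : ℝ)) atTop).mul hO).trans_tendsto
      (tendsto_rpow_mul_exp_neg_mul_atTop_nhds_zero _ _ hp)
  refine (h.comp tendsto_inv_nhdsGT_zero).congr' ?_
  filter_upwards [self_mem_nhdsWithin] with t ht
  rw [Function.comp_apply, ← cosKernel_one_div (inv_pos.mpr ht), one_div, inv_inv]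

lemma continuousWithinAt_cosKernel_zero {a : UnitAddCircle} (ha : a ≠ 0) :
    ContinuousWithinAt (cosKernel a) (Ici 0) 0 := by
  rw [← continuousWithinAt_Ioi_iff_Ici, ContinuousWithinAt, cosKernel_undef a le_rfl]
  exact tendsto_cosKernel_nhdsGT_zero ha

lemma half_ne_zero_unitAddCircle : ((1 / 2 : ℝ) : UnitAddCircle) ≠ 0 := by
  rw [Ne, AddCircle.coe_eq_zero_iff]
  rintro ⟨n, hn⟩
  have : (n : ℝ) * 2 = 1 := by simp at hn; linarith
  norm_cast at this
  omega

lemma hasSum_nat_cosKernel_half {t : ℝ} (ht : 0 < t) :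
    HasSum (fun n : ℕ ↦ (-1) ^ n * rexp (-π * (n + 1) ^ 2 * t))
      ((1 - cosKernel (1 / 2 : ℝ) t) / 2) := by
  have h := (hasSum_nat_cosKernel₀ (1 / 2) ht).div_const (-2)
  rw [show (cosKernel (1 / 2 : ℝ) t - 1) / -2 = (1 - cosKernel (1 / 2 : ℝ) t) / 2 by ring] at h
  refine h.congr_fun fun n ↦ ?_
  have : 2 * π * (1 / 2) * ((n : ℝ) + 1) = ((n + 1 : ℕ) : ℝ) * π := by push_cast; ring
  rw [this, cos_nat_mul_pi, pow_succ]
  ring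

lemma hasDerivAt_tsum_neg_one_pow_mul_exp {t : ℝ} (ht : 0 < t) :
    HasDerivAt (fun s ↦ ∑' n : ℕ, (-1) ^ n * rexp (-π * (n + 1) ^ 2 * s))
      (∑' n : ℕ, (-1) ^ n * (-π * (n + 1) ^ 2 * rexp (-π * (n + 1) ^ 2 * t))) t := by
  have hmem : t ∈ Ioi (t / 2) := by simp only [mem_Ioi]; linarith
  have hu : Summable fun n : ℕ ↦ π * (((n : ℝ) + 1) ^ 2 * rexp (-π * (n + 1) ^ 2 * (t / 2))) :=
    (HurwitzKernelBounds.summable_f_nat 2 1 (half_pos ht)).mul_left π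
  refine hasDerivAt_tsum_of_isPreconnected hu isOpen_Ioi isPreconnected_Ioi
    (g := fun (n : ℕ) (s : ℝ) ↦ (-1) ^ n * rexp (-π * (n + 1) ^ 2 * s))
    (g' := fun (n : ℕ) (s : ℝ) ↦ (-1) ^ n * (-π * (n + 1) ^ 2 * rexp (-π * (n + 1) ^ 2 * s)))
    (fun n s _ ↦ ?_) (fun n s hs ↦ ?_) hmem (hasSum_nat_cosKernel_half ht).summable hmem
  · exact (((hasDerivAt_id' s).const_mul _).exp.const_mul _).congr_deriv (by ring)
  · have hs : t / 2 < s := hs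
    rw [norm_mul, norm_pow, norm_neg, norm_one, one_pow, one_mul, Real.norm_eq_abs, neg_mul,
      neg_mul, abs_neg, abs_of_nonneg (by positivity), mul_assoc]
    have hn : 0 < π * ((n : ℝ) + 1) ^ 2 := by positivity
    exact mul_le_mul_of_nonneg_left (mul_le_mul_of_nonneg_left
      (exp_le_exp.mpr (by nlinarith)) (by positivity)) pi_pos.le

lemma hasDerivAt_cosKernel_half {t : ℝ} (ht : 0 < t) :
    HasDerivAt (cosKernel (1 / 2 : ℝ))
      (2 * π * ∑' n : ℕ, (-1) ^ n * ((n + 1) ^ 2 * rexp (-π * (n + 1) ^ 2 * t))) t := by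
  have h := ((hasDerivAt_tsum_neg_one_pow_mul_exp ht).const_mul 2).const_sub 1
  refine (h.congr_deriv ?_).congr_of_eventuallyEq ?_
  · rw [← tsum_mul_left, ← tsum_neg, ← tsum_mul_left]
    exact tsum_congr fun n ↦ by ring
  · filter_upwards [Ioi_mem_nhds ht] with s hs
    rw [(hasSum_nat_cosKernel_half hs).tsum_eq]
    ring

lemma monotoneOn_rpow_one_div_mul_exp (B : ℝ) :
    MonotoneOn (fun t : ℝ ↦ (1 / t) ^ (1 / 2 : ℝ) * rexp (-B * (1 / t))) (Ioc 0 (2 * B)) := by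
  rintro t₁ ⟨ht₁, -⟩ t₂ ⟨ht₂, htB⟩ h12
  have hlog : log t₂ - log t₁ ≤ 2 * (B / t₁ - B / t₂) :=
    calc log t₂ - log t₁ = log (t₂ / t₁) := (log_div ht₂.ne' ht₁.ne').symm
      _ ≤ t₂ / t₁ - 1 := log_le_sub_one_of_pos (by positivity)
      _ ≤ 2 * (B / t₁ - B / t₂) := by
        rw [div_sub_one ht₁.ne', div_sub_div _ _ ht₁.ne' ht₂.ne', mul_div_assoc',
          div_le_div_iff₀ ht₁ (by positivity)]
        nlinarith [mul_le_mul_of_nonneg_left htB (sub_nonneg.mpr h12)]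
  dsimp only
  rw [rpow_def_of_pos (one_div_pos.mpr ht₁), rpow_def_of_pos (one_div_pos.mpr ht₂), ← exp_add,
    ← exp_add, exp_le_exp]
  simp only [one_div, log_inv, ← div_eq_mul_inv, neg_div]
  linarith

lemma monotoneOn_cosKernel_half : MonotoneOn (cosKernel (1 / 2 : ℝ)) (Ioc 0 (π / 2)) := by
  rintro t₁ ⟨ht₁, ht₁π⟩ t₂ ⟨ht₂, ht₂π⟩ h12
  refine hasSum_le (fun n ↦ ?_) (hasSum_int_cosKernel_one_div _ ht₁)
    (hasSum_int_cosKernel_one_div _ ht₂)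
  have hn : (0 : ℝ) ≤ n * (n + 1) := by
    rcases le_or_gt 0 n with hn | hn
    · positivity
    · have : (n : ℝ) ≤ -1 := by exact_mod_cast Int.le_sub_one_of_lt hn
      nlinarith
  have hB : π / 2 ≤ 2 * (π * (n + 1 / 2) ^ 2) := by nlinarith [pi_pos]
  simpa only [neg_mul] using monotoneOn_rpow_one_div_mul_exp (π * (n + 1 / 2) ^ 2)
    ⟨ht₁, ht₁π.trans hB⟩ ⟨ht₂, ht₂π.trans hB⟩ h12

lemma antitone_sq_mul_exp {t : ℝ} (ht : 1 ≤ π * t) :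
    Antitone fun n : ℕ ↦ ((n : ℝ) + 1) ^ 2 * rexp (-π * (n + 1) ^ 2 * t) := by
  refine antitone_nat_of_succ_le fun n ↦ ?_
  set x := π * t * (2 * n + 3) with hxdef
  have hx : 2 * (n : ℝ) + 3 ≤ x := le_mul_of_one_le_left (by positivity) ht
  have hsplit :
      rexp (-π * ((n + 1 : ℕ) + 1) ^ 2 * t) = rexp (-π * (n + 1) ^ 2 * t) * rexp (-x) := by
    rw [← exp_add, hxdef]; push_cast; ring_nf
  have hsq : ((n : ℝ) + 2) ^ 2 ≤ (n + 1) ^ 2 * rexp x :=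
    calc ((n : ℝ) + 2) ^ 2 ≤ (n + 1) ^ 2 * (x + 1) := by nlinarith
      _ ≤ (n + 1) ^ 2 * rexp x := by gcongr; exact add_one_le_exp x
  rw [hsplit, mul_comm (rexp _), ← mul_assoc]
  gcongr
  rw [exp_neg, ← div_eq_mul_inv, div_le_iff₀ (exp_pos x)]
  push_cast
  linarith

lemma Antitone.tsum_alternating_nonneg {f : ℕ → ℝ} (hfa : Antitone f) (hfs : Summable f) :
    0 ≤ ∑' n, (-1) ^ n * f n := by
  simpa using hfa.alternating_series_le_tendsto hfs.tendsto_alternating_series_tsum 0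

lemma tsum_neg_one_pow_mul_sq_mul_exp_nonneg {t : ℝ} (ht : 0 < t) :
    0 ≤ ∑' n : ℕ, (-1) ^ n * ((n + 1) ^ 2 * rexp (-π * (n + 1) ^ 2 * t)) := by
  rcases lt_or_ge t (π / 2) with hsmall | hlarge
  · have hmem : t ∈ Ioo 0 (π / 2) := ⟨ht, hsmall⟩
    have h := (monotoneOn_cosKernel_half.mono Ioo_subset_Ioc_self).derivWithin_nonneg (x := t)
    rw [derivWithin_of_isOpen isOpen_Ioo hmem, (hasDerivAt_cosKernel_half ht).deriv] at h
    exact nonneg_of_mul_nonneg_right h (by positivity)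
  · exact (antitone_sq_mul_exp (by nlinarith [pi_gt_three])).tsum_alternating_nonneg
      (HurwitzKernelBounds.summable_f_nat 2 1 ht)

lemma f₃exit_eq_mul_tsum {R : ℝ} (hR : R ≠ 0) (t : ℝ) :
    f₃exit R t = π / (2 * R ^ 2) * (2 * π * ∑' n : ℕ,
      (-1) ^ n * ((n + 1) ^ 2 * rexp (-π * (n + 1) ^ 2 * (π / (2 * R ^ 2) * t)))) := by
  rw [f₃exit, ← mul_assoc, show π / (2 * R ^ 2) * (2 * π) = π ^ 2 / R ^ 2 by field_simp]
  congr 1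
  refine tsum_congr fun n ↦ ?_
  rw [mul_assoc]
  congr 3
  field_simp

/-- The exit-time density of the 3-ball integrates to one:
`∫_0^∞ f₃^exit(t) dt = 1`. -/
theorem f₃exit_integral_eq_one (R : ℝ) (hR : 0 < R) :
    ∫ t in Set.Ioi (0 : ℝ), f₃exit R t = 1 := by
  set c := π / (2 * R ^ 2)
  have hc : 0 < c := by positivity
  have hcont : ContinuousWithinAt (fun t ↦ cosKernel (1 / 2 : ℝ) (c * t)) (Ici 0) 0 :=
    (continuousWithinAt_cosKernel_zero half_ne_zero_unitAddCircle).comp_of_eq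
      (continuous_const_mul c).continuousWithinAt
      (fun t (ht : 0 ≤ t) ↦ mem_Ici.mpr (by positivity)) (mul_zero c)
  have hderiv (t : ℝ) (ht : t ∈ Ioi 0) :
      HasDerivAt (fun t ↦ cosKernel (1 / 2 : ℝ) (c * t)) (f₃exit R t) t := by
    rw [f₃exit_eq_mul_tsum hR.ne', mul_comm]
    exact (hasDerivAt_cosKernel_half (mul_pos hc ht)).comp t ((hasDerivAt_id' t).const_mul c
      |>.congr_deriv (mul_one c))
  have hnonneg (t : ℝ) (ht : t ∈ Ioi 0) : 0 ≤ f₃exit R t := by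
    rw [f₃exit_eq_mul_tsum hR.ne']
    have := tsum_neg_one_pow_mul_sq_mul_exp_nonneg (mul_pos hc ht)
    positivity
  rw [integral_Ioi_of_hasDerivAt_of_nonneg hcont hderiv hnonneg
    ((tendsto_cosKernel_atTop _).comp (tendsto_id.const_mul_atTop hc)),
    mul_zero, cosKernel_undef _ le_rfl, sub_zero]
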